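/- arXiv:0904.0068 — 2 statements merged into one kernel-verified Lean document; each statement's English description precedes it below -/
import Mathlib

section
/- Let A be an m×n real matrix satisfying SG_{s,β}(ξ,θ) with ξ ∈ (0,1), β ∈ [0,∞), θ ∈ [1,∞) for a norm ‖·‖ on ℝ^m. Let w ∈ ℝ^n satisfy w_i ≥ 0 for all i ∈ P_+ and ‖w − w^s‖₁ ≤ μ, where w^s is obtained from w by zeroing all but the s largest-in-magnitude entries. Let y ∈ ℝ^m satisfy ‖Aw − y‖ ≤ ε. Let x ∈ ℝ^n satisfy x_i ≥ 0 for all i ∈ P_+, ‖Ax − y‖ ≤ δ, and ‖x‖₁ ≤ Opt + ν, where Opt = min{‖z‖₁ : ‖Az − y‖ ≤ ε, z_i ≥ 0 for all i ∈ P_+}. Then ‖x − w‖₁ ≤ ((1+ξ)/(1−ξ))·ν + (2(1+ξθ)/(1−ξ))·μ + (2β/(1−ξ))·(ε + δ). -/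
/-!
Let `J` carry the `s` largest entries of `w`, so that `‖w_{Jᶜ}‖₁ ≤ μ`, and let `h = w - x`.
Optimality of `x` against the feasible `w` gives the cone inequality
`‖h_{Sᶜ}‖₁ - ‖h_S‖₁ ≤ ν + 2μ`, where `S ⊆ J` drops the indices of `P_+` at which `x > w`.
Writing `ψ_θ(t) = |t| + (θ - 1) t⁺`, the condition `SG_{s,β}(ξ,θ)` applied to `h` and `S`
gives `‖h_S‖₁ ≤ β (ε + δ) + ξ (‖h_{Sᶜ}‖₁ + (θ - 1) μ)`, since `h⁺ ≤ w` on `P_+ ∖ J` and `h < 0`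
on `J ∖ S`. Eliminating `‖h_S‖₁` between the two inequalities yields the bound.
-/

open Finset

noncomputable def normS1 {n : ℕ} (s : ℕ) (x : Fin n → ℝ) : ℝ :=
  (Finset.univ.powerset.filter (fun J : Finset (Fin n) => J.card ≤ s)).sup'
    ⟨∅, by simp⟩ (fun J => ∑ i ∈ J, |x i|)

noncomputable def dualNorm {m : ℕ} (N : (Fin m → ℝ) → ℝ) (v : Fin m → ℝ) : ℝ :=
  sSup {r : ℝ | ∃ x : Fin m → ℝ, N x ≤ 1 ∧ r = ∑ k, v k * x k}

def IsNorm {m : ℕ} (N : (Fin m → ℝ) → ℝ) : Prop :=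
  (∀ x y, N (x + y) ≤ N x + N y) ∧ (∀ (c : ℝ) (x), N (c • x) = |c| * N x) ∧
  (∀ x, N x = 0 → x = 0)

def SemiGood {m n : ℕ} (A : Matrix (Fin m) (Fin n) ℝ) (Pplus : Finset (Fin n)) (s : ℕ) : Prop :=
  ∀ w : Fin n → ℝ,
    (Finset.univ.filter (fun i => w i ≠ 0)).card ≤ s →
    (∀ i ∈ Pplus, 0 ≤ w i) →
    ∀ z : Fin n → ℝ, A.mulVec z = A.mulVec w → (∀ i ∈ Pplus, 0 ≤ z i) →
      (∑ i, |z i|) ≤ (∑ i, |w i|) → z = w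

def SGCond {m n : ℕ} (A : Matrix (Fin m) (Fin n) ℝ) (Pplus : Finset (Fin n))
    (s : ℕ) (ξ θ : ℝ) : Prop :=
  ∀ x : Fin n → ℝ, A.mulVec x = 0 → ∀ J : Finset (Fin n), J.card ≤ s →
    ∑ i ∈ J ∩ Pplus, x i + ∑ i ∈ J ∩ Pplusᶜ, |x i| ≤
      ξ * (∑ i ∈ Pplusᶜ \ J, |x i| + ∑ i ∈ Pplus \ J, max (-x i) (θ * x i))

def SGbCond {m n : ℕ} (A : Matrix (Fin m) (Fin n) ℝ) (Pplus : Finset (Fin n))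
    (s : ℕ) (ξ θ β : ℝ) (N : (Fin m → ℝ) → ℝ) : Prop :=
  ∀ x : Fin n → ℝ, ∀ J : Finset (Fin n), J.card ≤ s →
    ∑ i ∈ J ∩ Pplus, x i + ∑ i ∈ J ∩ Pplusᶜ, |x i| ≤
      β * N (A.mulVec x) +
        ξ * (∑ i ∈ Pplusᶜ \ J, |x i| + ∑ i ∈ Pplus \ J, max (-x i) (θ * x i))

def SGbCondSign {m n : ℕ} (A : Matrix (Fin m) (Fin n) ℝ) (Pplus : Finset (Fin n))
    (s : ℕ) (ξ β : ℝ) (N : (Fin m → ℝ) → ℝ) : Prop :=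
  ∀ J : Finset (Fin n), J.card ≤ s →
    ∀ x : Fin n → ℝ, (∀ i ∈ Pplus \ J, x i ≤ 0) →
      ∑ i ∈ J ∩ Pplus, x i + ∑ i ∈ J ∩ Pplusᶜ, |x i| ≤
        β * N (A.mulVec x) + ξ * ∑ i ∈ Jᶜ, |x i|

noncomputable def Phi {n : ℕ} (Pplus : Finset (Fin n)) (s : ℕ) (ξ θ : ℝ)
    (x : Fin n → ℝ) : ℝ :=
  normS1 s (fun i => if i ∈ Pplus then (1 + θ * ξ) * max (x i) 0 else (1 + ξ) * |x i|)

def VSGCert {m n : ℕ} (A : Matrix (Fin m) (Fin n) ℝ) (Pplus : Finset (Fin n))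
    (s : ℕ) (ξ θ ρ σ : ℝ) (N : (Fin m → ℝ) → ℝ)
    (Y : Matrix (Fin m) (Fin n) ℝ) (v : Fin m → ℝ) : Prop :=
  (∀ i, Phi Pplus s ξ θ (fun j => -((1 - Y.transpose * A : Matrix (Fin n) (Fin n) ℝ) j i)) + (A.transpose.mulVec v) i ≤ ξ) ∧
  (∀ i ∉ Pplus, Phi Pplus s ξ θ (fun j => (1 - Y.transpose * A : Matrix (Fin n) (Fin n) ℝ) j i) - (A.transpose.mulVec v) i ≤ ξ) ∧
  (∀ i ∈ Pplus, Phi Pplus s ξ θ (fun j => (1 - Y.transpose * A : Matrix (Fin n) (Fin n) ℝ) j i) - (A.transpose.mulVec v) i ≤ θ * ξ) ∧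
  (∀ i, dualNorm N (fun k => Y k i) ≤ σ) ∧
  dualNorm N v ≤ ρ

def VSG {m n : ℕ} (A : Matrix (Fin m) (Fin n) ℝ) (Pplus : Finset (Fin n))
    (s : ℕ) (ξ θ ρ σ : ℝ) (N : (Fin m → ℝ) → ℝ) : Prop :=
  ∃ (Y : Matrix (Fin m) (Fin n) ℝ) (v : Fin m → ℝ), VSGCert A Pplus s ξ θ ρ σ N Y v

def VSGbarCert {m n : ℕ} (A : Matrix (Fin m) (Fin n) ℝ) (Pplus : Finset (Fin n))
    (s : ℕ) (ξ σ θ : ℝ) (N : (Fin m → ℝ) → ℝ) (Y : Matrix (Fin m) (Fin n) ℝ) : Prop :=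
  (∀ i, dualNorm N (fun k => Y k i) ≤ σ) ∧
  (∀ i ∉ Pplus, ∀ j, |(1 - Y.transpose * A : Matrix (Fin n) (Fin n) ℝ) i j| ≤ ξ / ((1 + ξ) * s)) ∧
  (∀ i ∈ Pplus, ∀ j ∉ Pplus,
    -(ξ / ((1 + ξ * θ) * s)) ≤ (1 - Y.transpose * A : Matrix (Fin n) (Fin n) ℝ) i j ∧
      (1 - Y.transpose * A : Matrix (Fin n) (Fin n) ℝ) i j ≤ ξ / ((1 + ξ * θ) * s)) ∧
  (∀ i ∈ Pplus, ∀ j ∈ Pplus,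
    -(ξ / ((1 + ξ * θ) * s)) ≤ (1 - Y.transpose * A : Matrix (Fin n) (Fin n) ℝ) i j ∧
      (1 - Y.transpose * A : Matrix (Fin n) (Fin n) ℝ) i j ≤ ξ * θ / ((1 + ξ * θ) * s))

theorem max_neg_mul_eq_abs_add {θ : ℝ} (hθ : -1 ≤ θ) (a : ℝ) :
    max (-a) (θ * a) = |a| + (θ - 1) * max a 0 := by
  rcases le_total 0 a with ha | ha
  · rw [abs_of_nonneg ha, max_eq_left ha, max_eq_right (by nlinarith)]
    ring
  · rw [abs_of_nonpos ha, max_eq_right ha, max_eq_left (by nlinarith)]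
    ring

theorem IsNorm.sub_le {m : ℕ} {N : (Fin m → ℝ) → ℝ} (hN : IsNorm N) (u v : Fin m → ℝ) :
    N (u - v) ≤ N u + N v := by
  have hneg : N (-v) = N v := by
    rw [← neg_one_smul ℝ v, hN.2.1, abs_neg, abs_one, one_mul]
  simpa [sub_eq_add_neg, hneg] using hN.1 u (-v)

theorem exists_card_le_sum_compl_abs_eq {n : ℕ} (s : ℕ) (w : Fin n → ℝ) :
    ∃ J : Finset (Fin n), J.card ≤ s ∧ ∑ i ∈ Jᶜ, |w i| = ∑ i, |w i| - normS1 s w := by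
  obtain ⟨J, hJ, hsup⟩ := Finset.exists_mem_eq_sup' (⟨∅, by simp⟩ :
    (Finset.univ.powerset.filter (fun J : Finset (Fin n) => J.card ≤ s)).Nonempty)
    (fun J => ∑ i ∈ J, |w i|)
  refine ⟨J, (Finset.mem_filter.1 hJ).2, ?_⟩
  rw [normS1, hsup, ← Finset.sum_compl_add_sum J]
  ring

theorem sum_ite_mem_le {ι : Type*} [DecidableEq ι] (T U : Finset ι) {f : ι → ℝ}
    (hf : ∀ i, 0 ≤ f i) : ∑ i ∈ T, (if i ∈ U then f i else 0) ≤ ∑ i ∈ U, f i := by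
  rw [Finset.sum_ite_mem]
  exact Finset.sum_le_sum_of_subset_of_nonneg Finset.inter_subset_right fun i _ _ => hf i

theorem sum_compl_sub_sum_abs_sub_le {ι : Type*} [Fintype ι] [DecidableEq ι]
    (x w : ι → ℝ) (S J : Finset ι) (hJS : ∀ i ∈ J, i ∉ S → |w i| + |w i - x i| ≤ |x i|) :
    ∑ i ∈ Sᶜ, |w i - x i| - ∑ i ∈ S, |w i - x i| ≤
      ∑ i, |x i| - ∑ i, |w i| + 2 * ∑ i ∈ Jᶜ, |w i| := by
  have hS : -∑ i ∈ S, |w i - x i| ≤ ∑ i ∈ S, (|x i| - |w i|) := by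
    rw [← Finset.sum_neg_distrib]
    exact Finset.sum_le_sum fun i _ => by linarith [abs_sub_abs_le_abs_sub (w i) (x i)]
  have hSc : ∑ i ∈ Sᶜ, |w i - x i| - 2 * ∑ i ∈ Sᶜ, (if i ∈ Jᶜ then |w i| else 0) ≤
      ∑ i ∈ Sᶜ, (|x i| - |w i|) := by
    rw [Finset.mul_sum, ← Finset.sum_sub_distrib]
    refine Finset.sum_le_sum fun i hi => ?_
    by_cases hiJ : i ∈ J
    · simp only [Finset.mem_compl, hiJ, not_true_eq_false, if_false]
      linarith [hJS i hiJ (Finset.mem_compl.1 hi)]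
    · simp only [Finset.mem_compl, hiJ, not_false_eq_true, if_true]
      linarith [abs_sub (w i) (x i)]
  have htail : ∑ i ∈ Sᶜ, (if i ∈ Jᶜ then |w i| else 0) ≤ ∑ i ∈ Jᶜ, |w i| :=
    sum_ite_mem_le _ _ fun i => abs_nonneg (w i)
  rw [← Finset.sum_add_sum_compl S fun i => |x i|, ← Finset.sum_add_sum_compl S fun i => |w i|]
  simp only [Finset.sum_sub_distrib] at hS hSc
  linarith

theorem sum_sdiff_filter_max_sub_le {ι : Type*} [Fintype ι] [DecidableEq ι] {P J : Finset ι}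
    {x w : ι → ℝ} (hx : ∀ i ∈ P, 0 ≤ x i) (hw : ∀ i ∈ P, 0 ≤ w i) :
    ∑ i ∈ P \ J.filter (fun i => i ∈ P → x i ≤ w i), max (w i - x i) 0 ≤ ∑ i ∈ Jᶜ, |w i| := by
  refine (Finset.sum_le_sum fun i hi => ?_).trans
    (sum_ite_mem_le _ Jᶜ fun i => abs_nonneg (w i))
  obtain ⟨hiP, hiS⟩ := Finset.mem_sdiff.1 hi
  by_cases hiJ : i ∈ J
  · have hlt : w i < x i := by simpa [hiJ, hiP] using hiS
    simp [hiJ, hlt.le]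
  · simp only [Finset.mem_compl, hiJ, not_false_eq_true, if_true, abs_of_nonneg (hw i hiP)]
    exact max_le (by linarith [hx i hiP]) (hw i hiP)

theorem SGbCond.sum_abs_le {m n : ℕ} {A : Matrix (Fin m) (Fin n) ℝ} {P : Finset (Fin n)}
    {s : ℕ} {ξ θ β : ℝ} {N : (Fin m → ℝ) → ℝ} (hSG : SGbCond A P s ξ θ β N)
    (hθ : -1 ≤ θ) (S : Finset (Fin n)) (hS : S.card ≤ s) (h : Fin n → ℝ)
    (hpos : ∀ i ∈ S ∩ P, 0 ≤ h i) :
    ∑ i ∈ S, |h i| ≤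
      β * N (A.mulVec h) + ξ * (∑ i ∈ Sᶜ, |h i| + (θ - 1) * ∑ i ∈ P \ S, max (h i) 0) := by
  have hlhs : ∑ i ∈ S, |h i| = ∑ i ∈ S ∩ P, h i + ∑ i ∈ S ∩ Pᶜ, |h i| := by
    rw [← Finset.sdiff_eq_inter_compl, ← Finset.sum_inter_add_sum_sdiff S P]
    congr 1
    exact Finset.sum_congr rfl fun i hi => abs_of_nonneg (hpos i hi)
  have hrhs : ∑ i ∈ Pᶜ \ S, |h i| + ∑ i ∈ P \ S, max (-h i) (θ * h i) =
      ∑ i ∈ Sᶜ, |h i| + (θ - 1) * ∑ i ∈ P \ S, max (h i) 0 := by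
    simp only [max_neg_mul_eq_abs_add hθ, Finset.sum_add_distrib, ← Finset.mul_sum]
    have hPS : Sᶜ ∩ P = P \ S := by ext; simp [and_comm]
    have hPcS : Sᶜ \ P = Pᶜ \ S := by ext; simp [and_comm]
    rw [← Finset.sum_inter_add_sum_sdiff Sᶜ P, hPS, hPcS]
    ring
  calc ∑ i ∈ S, |h i| ≤ β * N (A.mulVec h) +
        ξ * (∑ i ∈ Pᶜ \ S, |h i| + ∑ i ∈ P \ S, max (-h i) (θ * h i)) := hlhs ▸ hSG h S hS
    _ = _ := by rw [hrhs]

theorem add_le_of_cone_of_sg {a c ν μ β Δ ξ θ : ℝ} (hξ0 : 0 ≤ ξ) (hξ1 : ξ < 1)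
    (hcone : c - a ≤ ν + 2 * μ) (hsg : a ≤ β * Δ + ξ * (c + (θ - 1) * μ)) :
    a + c ≤ (1 + ξ) / (1 - ξ) * ν + 2 * (1 + ξ * θ) / (1 - ξ) * μ + 2 * β / (1 - ξ) * Δ := by
  have h1ξ : 0 < 1 - ξ := by linarith
  have key : (1 - ξ) * (a + c) ≤ (1 + ξ) * ν + 2 * (1 + ξ * θ) * μ + 2 * β * Δ := by
    nlinarith [mul_le_mul_of_nonneg_left hcone (by linarith : (0 : ℝ) ≤ 1 + ξ)]
  calc a + c = (1 - ξ) * (a + c) / (1 - ξ) := by field_simp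
    _ ≤ ((1 + ξ) * ν + 2 * (1 + ξ * θ) * μ + 2 * β * Δ) / (1 - ξ) := by gcongr
    _ = _ := by ring

theorem stmt5 {m n : ℕ} (A : Matrix (Fin m) (Fin n) ℝ) (Pplus : Finset (Fin n))
    (s : ℕ) (ξ θ β : ℝ) (hξ0 : 0 < ξ) (hξ1 : ξ < 1) (hβ : 0 ≤ β) (hθ : 1 ≤ θ)
    (N : (Fin m → ℝ) → ℝ) (hN : IsNorm N)
    (hSG : SGbCond A Pplus s ξ θ β N)
    (w : Fin n → ℝ) (μ : ℝ) (hw : ∀ i ∈ Pplus, 0 ≤ w i)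
    (hμ : (∑ i, |w i|) - normS1 s w ≤ μ)
    (y : Fin m → ℝ) (ε : ℝ) (hε : N (A.mulVec w - y) ≤ ε)
    (x : Fin n → ℝ) (ν δ : ℝ) (hx : ∀ i ∈ Pplus, 0 ≤ x i)
    (hδ : N (A.mulVec x - y) ≤ δ)
    (hopt : (∑ i, |x i|) ≤
      sInf {r : ℝ | ∃ z : Fin n → ℝ,
        N (A.mulVec z - y) ≤ ε ∧ (∀ i ∈ Pplus, 0 ≤ z i) ∧ r = ∑ i, |z i|} + ν) :
    (∑ i, |x i - w i|) ≤
      (1 + ξ) / (1 - ξ) * ν + 2 * (1 + ξ * θ) / (1 - ξ) * μ + 2 * β / (1 - ξ) * (ε + δ) := by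
  obtain ⟨J, hJs, hJ⟩ := exists_card_le_sum_compl_abs_eq s w
  have hxw : ∑ i, |x i| ≤ ∑ i, |w i| + ν := by
    refine hopt.trans (add_le_add_left (csInf_le ?_ ?_) ν)
    · exact ⟨0, by rintro _ ⟨z, -, -, rfl⟩; positivity⟩
    · exact ⟨w, hε, hw, rfl⟩
  set S := J.filter fun i => i ∈ Pplus → x i ≤ w i
  have hcone := sum_compl_sub_sum_abs_sub_le x w S J fun i hiJ hiS => by
    obtain ⟨hiP, hlt⟩ : i ∈ Pplus ∧ w i < x i := by simpa [S, hiJ] using hiS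
    rw [abs_of_nonneg (hw i hiP), abs_of_nonneg (hx i hiP), abs_of_neg (by linarith)]
    linarith
  have hres : N (A.mulVec (w - x)) ≤ ε + δ := by
    rw [Matrix.mulVec_sub, ← sub_sub_sub_cancel_right _ _ y]
    exact (hN.sub_le _ _).trans (add_le_add hε hδ)
  have hpos : ∑ i ∈ Pplus \ S, max (w i - x i) 0 ≤ μ :=
    (sum_sdiff_filter_max_sub_le hx hw).trans (hJ ▸ hμ)
  have hsg := hSG.sum_abs_le (by linarith) S ((Finset.card_filter_le _ _).trans hJs) (w - x)
    fun i hi => by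
      obtain ⟨hiS, hiP⟩ := Finset.mem_inter.1 hi
      simpa using (Finset.mem_filter.1 hiS).2 hiP
  have hsum : ∑ i, |x i - w i| = ∑ i ∈ S, |w i - x i| + ∑ i ∈ Sᶜ, |w i - x i| := by
    simp_rw [abs_sub_comm (x _)]
    exact (Finset.sum_add_sum_compl S _).symm
  rw [hsum]
  simp only [Pi.sub_apply] at hsg
  exact add_le_of_cone_of_sg hξ0.le hξ1 (by linarith) (hsg.trans (by gcongr))
end

section
/- Let m, n be positive integers with n > 2·(2√(2m) + 1)², let ξ < 1, θ ≥ 1, σ ≥ 0, ρ ≥ 0, let s be a positive integer, and let A be an m×n real matrix satisfying VSG_s(ξ,θ,ρ,σ). Then s ≤ 2√(2m) + 1. -/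
open Finset

/-!
Write `B = Yᵀ A`, a matrix of rank at most `m`, and `C = 1 - B`. If `s` were larger than
`2 √(2m) + 1`, one of the classes `P₊`, `Pₙ` would contain a set `K` of `8m + 1` indices with
`|K| ≤ (s - 1)² + 1`. On such a class the certificate bounds the positive and the negative
`s`-sparse mass of every column of `C` by numbers adding up to less than `1`. Hence each
diagonal entry `a_i = B_ii` is positive and, splitting column `i` into its `s - 1` largest
entries and the rest, the off-diagonal squares of column `i` of `B` restricted to `K` sum to at
most `4 a_i²`. The inequality `(tr M)² ≤ rank M · ‖M‖_F²`, applied to the restriction of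
`B` to `K` with columns rescaled by `a_i / ‖B_{K,i}‖²`, then gives `|K| / 5 ≤ m`, a
contradiction.
-/

open scoped RealInnerProductSpace

section LinearAlgebra

variable {ι E : Type*} [Fintype ι] [NormedAddCommGroup E] [InnerProductSpace ℝ E]
  [FiniteDimensional ℝ E]

theorem OrthonormalBasis.sum_norm_sq_starProjection (b : OrthonormalBasis ι ℝ E)
    (W : Submodule ℝ E) :
    ∑ i, ‖W.starProjection (b i)‖ ^ 2 = Module.finrank ℝ W := by
  have hP : LinearMap.IsProj W (W.starProjection : E →ₗ[ℝ] E) :=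
    ⟨W.starProjection_apply_mem, fun x hx => Submodule.starProjection_eq_self_iff.mpr hx⟩
  rw [← hP.trace, LinearMap.trace_eq_sum_inner _ b]
  refine Finset.sum_congr rfl fun i _ => ?_
  rw [← real_inner_self_eq_norm_sq, W.inner_starProjection_left_eq_right,
    Submodule.starProjection_eq_self_iff.mpr (W.starProjection_apply_mem _)]
  rfl

theorem OrthonormalBasis.sq_sum_inner_le_finrank_mul (b : OrthonormalBasis ι ℝ E)
    (W : Submodule ℝ E) (c : ι → E) (hc : ∀ i, c i ∈ W) :
    (∑ i, ⟪b i, c i⟫) ^ 2 ≤ Module.finrank ℝ W * ∑ i, ‖c i‖ ^ 2 := by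
  have hproj : ∀ i, ⟪b i, c i⟫ = ⟪W.starProjection (b i), c i⟫ := fun i => by
    rw [W.inner_starProjection_left_eq_right, Submodule.starProjection_eq_self_iff.mpr (hc i)]
  have hCS : |∑ i, ⟪b i, c i⟫| ≤ ∑ i, ‖W.starProjection (b i)‖ * ‖c i‖ := by
    simp_rw [hproj]
    exact (Finset.abs_sum_le_sum_abs _ _).trans
      (Finset.sum_le_sum fun i _ => abs_real_inner_le_norm _ _)
  calc (∑ i, ⟪b i, c i⟫) ^ 2 ≤ (∑ i, ‖W.starProjection (b i)‖ * ‖c i‖) ^ 2 := by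
        rw [← sq_abs]
        exact pow_le_pow_left₀ (abs_nonneg _) hCS 2
    _ ≤ (∑ i, ‖W.starProjection (b i)‖ ^ 2) * ∑ i, ‖c i‖ ^ 2 :=
        Finset.sum_mul_sq_le_sq_mul_sq _ _ _
    _ = Module.finrank ℝ W * ∑ i, ‖c i‖ ^ 2 := by rw [b.sum_norm_sq_starProjection]

end LinearAlgebra

theorem Matrix.sq_trace_le_rank_mul_sum_sq {κ : Type*} [Fintype κ] [DecidableEq κ]
    (M : Matrix κ κ ℝ) :
    M.trace ^ 2 ≤ M.rank * ∑ i, ∑ j, M i j ^ 2 := by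
  let b := EuclideanSpace.basisFun κ ℝ
  have hrank : M.rank = Module.finrank ℝ (LinearMap.range (Matrix.toEuclideanLin M)) :=
    M.rank_eq_finrank_range_toLin b.toBasis b.toBasis
  have hcol : ∀ j, Matrix.toEuclideanLin M (b j) = WithLp.toLp 2 (fun i => M i j) := fun j => by
    ext i
    simp [b, Matrix.mulVec, dotProduct, Pi.single_apply]
  have := b.sq_sum_inner_le_finrank_mul _ (fun j => Matrix.toEuclideanLin M (b j))
    (fun j => LinearMap.mem_range_self _ _)
  simp only [hcol, ← hrank, EuclideanSpace.norm_sq_eq] at this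
  rw [Finset.sum_comm]
  simpa [b, Matrix.trace, EuclideanSpace.inner_single_left] using this

theorem Matrix.sq_sum_mul_diag_le {ι : Type*} [Fintype ι] (B : Matrix ι ι ℝ) (K : Finset ι)
    (w : ι → ℝ) :
    (∑ i ∈ K, w i * B i i) ^ 2 ≤ B.rank * ∑ i ∈ K, w i ^ 2 * ∑ j ∈ K, B j i ^ 2 := by
  classical
  let M : Matrix K K ℝ :=
    B.submatrix (Subtype.val : K → ι) (Subtype.val : K → ι) *
      Matrix.diagonal (fun i : K => w i)
  have hM : ∀ i j, M i j = B i j * w j := fun i j => by simp [M]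
  have hrank : M.rank ≤ B.rank := (Matrix.rank_mul_le_left _ _).trans (B.rank_submatrix_le _ _)
  calc (∑ i ∈ K, w i * B i i) ^ 2 = M.trace ^ 2 := by
        rw [Matrix.trace, ← Finset.sum_coe_sort K]
        simp only [Matrix.diag_apply, hM, mul_comm]
    _ ≤ M.rank * ∑ i, ∑ j, M i j ^ 2 := M.sq_trace_le_rank_mul_sum_sq
    _ ≤ B.rank * ∑ i, ∑ j, M i j ^ 2 := by gcongr
    _ = B.rank * ∑ i ∈ K, w i ^ 2 * ∑ j ∈ K, B j i ^ 2 := by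
        rw [Finset.sum_comm, ← Finset.sum_coe_sort K]
        congr 1
        refine Finset.sum_congr rfl fun i _ => ?_
        rw [Finset.mul_sum, ← Finset.sum_coe_sort K]
        simp only [hM, mul_pow, mul_comm]

section SparseColumns

variable {ι : Type*}

/-- Entries above `π / t` are at most `t` in number, so they contribute at most `π²`; the at most
`t²` remaining ones contribute at most `t² (π / t)² = π²`. -/
theorem Finset.sum_sq_le_two_mul_sq_of_sum_le {F : Finset ι} {x : ι → ℝ} {t : ℕ} {π : ℝ}
    (hx : ∀ j ∈ F, 0 ≤ x j) (hF : #F ≤ t ^ 2)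
    (hsum : ∀ T ⊆ F, #T ≤ t → ∑ j ∈ T, x j ≤ π) :
    ∑ j ∈ F, x j ^ 2 ≤ 2 * π ^ 2 := by
  classical
  obtain rfl | ht := Nat.eq_zero_or_pos t
  · simp_all
  have hπ : 0 ≤ π := by simpa using hsum ∅ (empty_subset F) (by simp)
  set T := F.filter (fun j => π / t < x j)
  have hTF : T ⊆ F := filter_subset _ _
  have hT : #T ≤ t := by
    by_contra! h
    obtain ⟨T', hT'T, hT'⟩ := exists_subset_card_eq h.le
    have hlt : π < ∑ j ∈ T', x j :=
      calc π = ∑ _j ∈ T', π / t := by rw [sum_const, hT', nsmul_eq_mul]; field_simp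
        _ < ∑ j ∈ T', x j := sum_lt_sum_of_nonempty (card_pos.mp (hT' ▸ ht))
          fun j hj => (mem_filter.mp (hT'T hj)).2
    linarith [hsum T' (hT'T.trans hTF) hT'.le]
  have hlarge : ∑ j ∈ T, x j ^ 2 ≤ π ^ 2 :=
    calc ∑ j ∈ T, x j ^ 2 ≤ (∑ j ∈ T, x j) ^ 2 :=
          sum_sq_le_sq_sum_of_nonneg fun j hj => hx j (hTF hj)
      _ ≤ π ^ 2 :=
          pow_le_pow_left₀ (sum_nonneg fun j hj => hx j (hTF hj)) (hsum T hTF hT) 2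
  have hsmall : ∑ j ∈ F.filter (fun j => ¬π / t < x j), x j ^ 2 ≤ π ^ 2 :=
    calc ∑ j ∈ F.filter (fun j => ¬π / t < x j), x j ^ 2
        ≤ ∑ _j ∈ F.filter (fun j => ¬π / t < x j), (π / t) ^ 2 :=
          sum_le_sum fun j hj => by
            obtain ⟨hjF, hj⟩ := mem_filter.mp hj
            exact pow_le_pow_left₀ (hx j hjF) (not_lt.mp hj) 2
      _ ≤ #F * (π / t) ^ 2 := by
          rw [sum_const, nsmul_eq_mul]
          gcongr
          exact filter_subset _ _
      _ ≤ t ^ 2 * (π / t) ^ 2 := by gcongr; exact_mod_cast hF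
      _ = π ^ 2 := by field_simp
  rw [← sum_filter_add_sum_filter_not F (fun j => π / t < x j)]
  linarith

/-- Each index set `T ⊆ K \ {i}` with `|T| ≤ s - 1` is completed by `i` to one allowed in `hp`,
`hq`; this bounds the sparse masses on `K \ {i}` by `p - (d i)⁺` and `q - (d i)⁻`. -/
theorem sum_sq_erase_le_four_mul_sq [DecidableEq ι] {K : Finset ι} {i : ι} (hi : i ∈ K)
    {s : ℕ} (hs : 0 < s) (hK : #K ≤ (s - 1) ^ 2 + 1) (d : ι → ℝ) {p q : ℝ}
    (hpq : p + q < 1)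
    (hp : ∀ J ⊆ K, #J ≤ s → ∑ j ∈ J, max (d j) 0 ≤ p)
    (hq : ∀ J ⊆ K, #J ≤ s → ∑ j ∈ J, max (-d j) 0 ≤ q) :
    0 < 1 - d i ∧ ∑ j ∈ K.erase i, d j ^ 2 ≤ 4 * (1 - d i) ^ 2 := by
  have hcard : #(K.erase i) ≤ (s - 1) ^ 2 := by rw [card_erase_of_mem hi]; omega
  have hrest : ∀ (f : ι → ℝ) (π : ℝ),
      (∀ J ⊆ K, #J ≤ s → ∑ j ∈ J, max (f j) 0 ≤ π) →
      ∀ T ⊆ K.erase i, #T ≤ s - 1 → ∑ j ∈ T, max (f j) 0 ≤ π - max (f i) 0 := by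
    intro f π hf T hT hTs
    have hiT : i ∉ T := fun h => (mem_erase.mp (hT h)).1 rfl
    have := hf (insert i T) (insert_subset hi (hT.trans (erase_subset i K)))
      (by rw [card_insert_of_notMem hiT]; omega)
    rw [sum_insert hiT] at this
    linarith
  have hpi : max (d i) 0 ≤ p := by simpa using hp {i} (singleton_subset_iff.mpr hi) (by simpa)
  have hqi : max (-d i) 0 ≤ q := by simpa using hq {i} (singleton_subset_iff.mpr hi) (by simpa)
  have hpos := sum_sq_le_two_mul_sq_of_sum_le (fun j _ => le_max_right (d j) 0) hcard
    (hrest d p hp)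
  have hneg := sum_sq_le_two_mul_sq_of_sum_le (fun j _ => le_max_right (-d j) 0) hcard
    (hrest (fun j => -d j) q hq)
  have hsplit : ∀ y : ℝ, y ^ 2 = max y 0 ^ 2 + max (-y) 0 ^ 2 := fun y => by
    rcases le_total y 0 with h | h
    · rw [max_eq_right h, max_eq_left (neg_nonneg.mpr h)]; ring
    · rw [max_eq_left h, max_eq_right (neg_nonpos.mpr h)]; ring
  have hp' : (p - max (d i) 0) ^ 2 ≤ (1 - d i) ^ 2 :=
    pow_le_pow_left₀ (by linarith) (by linarith [le_max_left (d i) 0, le_max_right (-d i) 0]) 2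
  have hq' : (q - max (-d i) 0) ^ 2 ≤ (1 - d i) ^ 2 :=
    pow_le_pow_left₀ (by linarith) (by linarith [le_max_left (d i) 0, le_max_right (-d i) 0]) 2
  refine ⟨by linarith [le_max_left (d i) 0, le_max_right (-d i) 0], ?_⟩
  rw [sum_congr rfl fun j _ => hsplit (d j), sum_add_distrib]
  linarith

/-- `B i i = 1 - (1 - B) i i` is positive on `K`, so the weights `B i i / ‖B_{K,i}‖²` turn
`Matrix.sq_sum_mul_diag_le` into `(∑ ρ)² ≤ rank B · ∑ ρ`, where
`ρ i = B i i ² / ‖B_{K,i}‖² ≥ 1 / 5`. -/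
theorem card_le_five_mul_rank_of_sparse_columns [Fintype ι] [DecidableEq ι] (B : Matrix ι ι ℝ)
    (K : Finset ι) {s : ℕ} (hs : 0 < s) (hK : #K ≤ (s - 1) ^ 2 + 1) (p q : ι → ℝ)
    (hpq : ∀ i ∈ K, p i + q i < 1)
    (hp : ∀ i ∈ K, ∀ J ⊆ K, #J ≤ s → ∑ j ∈ J, max ((1 - B) j i) 0 ≤ p i)
    (hq : ∀ i ∈ K, ∀ J ⊆ K, #J ≤ s → ∑ j ∈ J, max (-(1 - B) j i) 0 ≤ q i) :
    #K ≤ 5 * B.rank := by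
  set S : ι → ℝ := fun i => ∑ j ∈ K, B j i ^ 2
  have hcol : ∀ i ∈ K, 0 < B i i ∧ S i ≤ 5 * B i i ^ 2 := fun i hi => by
    obtain ⟨hpos, hsq⟩ := sum_sq_erase_le_four_mul_sq hi hs hK (fun j => (1 - B) j i)
      (hpq i hi) (hp i hi) (hq i hi)
    have hdiag : 1 - (1 - B) i i = B i i := by simp
    have hoff : ∑ j ∈ K.erase i, (1 - B) j i ^ 2 = ∑ j ∈ K.erase i, B j i ^ 2 :=
      sum_congr rfl fun j hj => by simp [Matrix.one_apply_ne (ne_of_mem_erase hj)]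
    rw [hdiag] at hpos hsq
    refine ⟨hpos, ?_⟩
    simp only [S, ← add_sum_erase K _ hi]
    linarith
  set ρ : ι → ℝ := fun i => B i i ^ 2 / S i
  have hS : ∀ i ∈ K, 0 < S i := fun i hi =>
    (pow_pos (hcol i hi).1 2).trans_le (single_le_sum (fun j _ => sq_nonneg (B j i)) hi)
  have hρ : ∀ i ∈ K, 1 / 5 ≤ ρ i := fun i hi => by
    rw [div_le_div_iff₀ (by norm_num) (hS i hi)]
    linarith [(hcol i hi).2]
  have hdiag : ∀ i ∈ K, B i i / S i * B i i = ρ i := fun i _ => by ring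
  have hnorm : ∀ i ∈ K, (B i i / S i) ^ 2 * S i = ρ i := fun i hi => by
    simp only [ρ]
    field_simp [(hS i hi).ne']
  have htrace := B.sq_sum_mul_diag_le K (fun i => B i i / S i)
  rw [sum_congr rfl hdiag, sum_congr rfl hnorm] at htrace
  have hρsum : (#K : ℝ) / 5 ≤ ∑ i ∈ K, ρ i := by
    have := card_nsmul_le_sum K ρ (1 / 5) hρ
    rw [nsmul_eq_mul] at this
    linarith
  have hρrank : ∑ i ∈ K, ρ i ≤ B.rank := by
    by_contra! h
    nlinarith [(Nat.cast_nonneg B.rank : (0 : ℝ) ≤ B.rank)]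
  have : (#K : ℝ) ≤ 5 * B.rank := by linarith
  exact_mod_cast this

end SparseColumns

theorem Finset.exists_card_eq_and_subset_or_subset_compl {α : Type*} [Fintype α]
    [DecidableEq α] (P : Finset α) {k : ℕ} (hk : 2 * k ≤ Fintype.card α + 1) :
    ∃ K : Finset α, #K = k ∧ (K ⊆ P ∨ K ⊆ Pᶜ) := by
  rcases le_or_gt k #P with h | h
  · obtain ⟨K, hKP, hK⟩ := exists_subset_card_eq h
    exact ⟨K, hK, .inl hKP⟩
  · have : k ≤ #Pᶜ := by rw [card_compl]; omega
    obtain ⟨K, hKP, hK⟩ := exists_subset_card_eq this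
    exact ⟨K, hK, .inr hKP⟩

section Certificate

variable {m n : ℕ}

theorem sum_abs_le_normS1 {s : ℕ} (x : Fin n → ℝ) {J : Finset (Fin n)} (hJ : #J ≤ s) :
    ∑ j ∈ J, |x j| ≤ normS1 s x :=
  le_sup' (fun J => ∑ i ∈ J, |x i|) (mem_filter.mpr ⟨mem_powerset.mpr (subset_univ J), hJ⟩)

theorem normS1_nonneg (s : ℕ) (x : Fin n → ℝ) : 0 ≤ normS1 s x := by
  simpa using sum_abs_le_normS1 x (J := ∅) (Nat.zero_le s)

theorem Phi_nonneg (Pplus : Finset (Fin n)) (s : ℕ) (ξ θ : ℝ) (x : Fin n → ℝ) :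
    0 ≤ Phi Pplus s ξ θ x :=
  normS1_nonneg s _

theorem mul_sum_posPart_le_Phi_of_subset {Pplus J : Finset (Fin n)} {s : ℕ} {ξ θ : ℝ}
    (hJ : J ⊆ Pplus) (hJs : #J ≤ s) (hw : 0 ≤ 1 + θ * ξ) (x : Fin n → ℝ) :
    (1 + θ * ξ) * ∑ j ∈ J, max (x j) 0 ≤ Phi Pplus s ξ θ x := by
  refine le_trans (le_of_eq ?_) (sum_abs_le_normS1 _ hJs)
  rw [mul_sum]
  refine sum_congr rfl fun j hj => ?_
  rw [if_pos (hJ hj), abs_of_nonneg (mul_nonneg hw (le_max_right _ _))]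

theorem mul_sum_posPart_le_Phi_of_subset_compl {Pplus J : Finset (Fin n)} {s : ℕ} {ξ θ : ℝ}
    (hJ : J ⊆ Pplusᶜ) (hJs : #J ≤ s) (hw : 0 ≤ 1 + ξ) (x : Fin n → ℝ) :
    (1 + ξ) * ∑ j ∈ J, max (x j) 0 ≤ Phi Pplus s ξ θ x := by
  refine le_trans ?_ (sum_abs_le_normS1 _ hJs)
  rw [mul_sum]
  refine sum_le_sum fun j hj => ?_
  rw [if_neg (mem_compl.mp (hJ hj)), abs_of_nonneg (mul_nonneg hw (abs_nonneg _))]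
  exact mul_le_mul_of_nonneg_left (max_le (le_abs_self _) (abs_nonneg _)) hw

theorem xi_nonneg_of_VSGCert {A Y : Matrix (Fin m) (Fin n) ℝ} {Pplus : Finset (Fin n)} {s : ℕ}
    {ξ θ ρ σ : ℝ} {N : (Fin m → ℝ) → ℝ} {v : Fin m → ℝ}
    (hc : VSGCert A Pplus s ξ θ ρ σ N Y v) (hθ : -1 < θ) (i : Fin n) : 0 ≤ ξ := by
  obtain ⟨hneg, hposn, hposp, -, -⟩ := hc
  let C : Matrix (Fin n) (Fin n) ℝ := 1 - Y.transpose * A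
  have := hneg i
  have := Phi_nonneg Pplus s ξ θ (fun j => -C j i)
  have := Phi_nonneg Pplus s ξ θ (fun j => C j i)
  by_cases hi : i ∈ Pplus
  · have := hposp i hi
    nlinarith
  · have := hposn i hi
    linarith

/-- The sparse masses of column `i` of `1 - B` are at most `Phi (Cᵢ) / w` and `Phi (-Cᵢ) / w`,
whose sum is below `(b + ξ) / w < 1`. -/
theorem card_le_five_mul_rank_of_cert_bounds {B : Matrix (Fin n) (Fin n) ℝ}
    {Pplus K : Finset (Fin n)} {s : ℕ} {ξ θ w b : ℝ} {r : Fin n → ℝ} (hs : 0 < s)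
    (hK : #K ≤ (s - 1) ^ 2 + 1) (hw : 0 < w) (hwb : ξ + b < w)
    (hPhi : ∀ x J, J ⊆ K → #J ≤ s → w * ∑ j ∈ J, max (x j) 0 ≤ Phi Pplus s ξ θ x)
    (hneg : ∀ i ∈ K, Phi Pplus s ξ θ (fun j => -(1 - B) j i) + r i ≤ ξ)
    (hpos : ∀ i ∈ K, Phi Pplus s ξ θ (fun j => (1 - B) j i) - r i ≤ b) :
    #K ≤ 5 * B.rank := by
  refine card_le_five_mul_rank_of_sparse_columns B K hs hK
    (fun i => Phi Pplus s ξ θ (fun j => (1 - B) j i) / w)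
    (fun i => Phi Pplus s ξ θ (fun j => -(1 - B) j i) / w)
    (fun i hi => ?_) (fun i _ J hJ hJs => ?_) (fun i _ J hJ hJs => ?_)
  · rw [← add_div, div_lt_one hw]
    linarith [hneg i hi, hpos i hi]
  · exact (le_div_iff₀' hw).mpr (hPhi _ J hJ hJs)
  · exact (le_div_iff₀' hw).mpr (hPhi _ J hJ hJs)

end Certificate

theorem eight_mul_lt_sub_one_sq {m s : ℕ} (h : 2 * Real.sqrt (2 * m) + 1 < s) :
    8 * m < (s - 1) ^ 2 := by
  have hs : 1 ≤ s := by exact_mod_cast (by linarith [Real.sqrt_nonneg (2 * m)] : (1 : ℝ) ≤ s)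
  have hsq : (2 * Real.sqrt (2 * m)) ^ 2 = 8 * m := by
    rw [mul_pow, Real.sq_sqrt (by positivity)]
    ring
  have : (8 * m : ℝ) < ((s - 1 : ℕ) : ℝ) ^ 2 := by
    rw [Nat.cast_sub hs, ← hsq]
    exact pow_lt_pow_left₀ (by push_cast; linarith) (by positivity) two_ne_zero
  exact_mod_cast this

theorem sixteen_mul_add_two_lt {m n : ℕ} (h : 2 * (2 * Real.sqrt (2 * m) + 1) ^ 2 < n) :
    16 * m + 2 < n := by
  have hsq : Real.sqrt (2 * m) ^ 2 = 2 * m := Real.sq_sqrt (by positivity)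
  have : (16 * m + 2 : ℝ) < n := by nlinarith [Real.sqrt_nonneg (2 * m)]
  exact_mod_cast this

theorem stmt9_general {m n : ℕ}
    (A : Matrix (Fin m) (Fin n) ℝ) (Pplus : Finset (Fin n))
    (s : ℕ) (ξ θ ρ σ : ℝ)
    (hξ : ξ < 1) (hθ : 1 ≤ θ)
    (N : (Fin m → ℝ) → ℝ)
    (hbig : (n : ℝ) > 2 * (2 * Real.sqrt (2 * m) + 1) ^ 2)
    (h : VSG A Pplus s ξ θ ρ σ N) :
    (s : ℝ) ≤ 2 * Real.sqrt (2 * m) + 1 := by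
  by_contra! hs
  obtain ⟨Y, v, hc⟩ := h
  have hs0 : 0 < s := by
    exact_mod_cast (by linarith [Real.sqrt_nonneg (2 * m)] : (0 : ℝ) < s)
  have hK : 8 * m + 1 ≤ (s - 1) ^ 2 + 1 := by linarith [eight_mul_lt_sub_one_sq hs]
  obtain ⟨K, hKcard, hKclass⟩ :=
    Pplus.exists_card_eq_and_subset_or_subset_compl (k := 8 * m + 1) (by
      have := sixteen_mul_add_two_lt hbig
      simp only [Fintype.card_fin]
      omega)
  obtain ⟨i, -⟩ : K.Nonempty := card_pos.mp (by omega)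
  have hξ0 : 0 ≤ ξ := xi_nonneg_of_VSGCert hc (by linarith) i
  obtain ⟨hneg, hposn, hposp, -, -⟩ := hc
  have hrank : (Y.transpose * A).rank ≤ m :=
    (Matrix.rank_mul_le_left _ _).trans (Matrix.rank_le_width _)
  have : #K ≤ 5 * (Y.transpose * A).rank := by
    rcases hKclass with hKP | hKP
    · exact card_le_five_mul_rank_of_cert_bounds hs0 (hKcard ▸ hK) (by positivity)
        (b := θ * ξ) (by linarith)
        (fun x J hJ hJs => mul_sum_posPart_le_Phi_of_subset (hJ.trans hKP) hJs (by positivity) x)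
        (fun i _ => hneg i) (fun i hi => hposp i (hKP hi))
    · exact card_le_five_mul_rank_of_cert_bounds hs0 (hKcard ▸ hK) (by positivity)
        (b := ξ) (by linarith)
        (fun x J hJ hJs => mul_sum_posPart_le_Phi_of_subset_compl (hJ.trans hKP) hJs
          (by positivity) x)
        (fun i _ => hneg i) (fun i hi => hposn i (mem_compl.mp (hKP hi)))
  omega

theorem stmt9 {m n : ℕ} (hm : 0 < m) (hn : 0 < n)
    (A : Matrix (Fin m) (Fin n) ℝ) (Pplus : Finset (Fin n))
    (s : ℕ) (hs : 0 < s) (ξ θ ρ σ : ℝ)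
    (hξ : ξ < 1) (hθ : 1 ≤ θ) (hσ : 0 ≤ σ) (hρ : 0 ≤ ρ)
    (N : (Fin m → ℝ) → ℝ) (hN : IsNorm N)
    (hbig : (n : ℝ) > 2 * (2 * Real.sqrt (2 * m) + 1) ^ 2)
    (h : VSG A Pplus s ξ θ ρ σ N) :
    (s : ℝ) ≤ 2 * Real.sqrt (2 * m) + 1 :=
  stmt9_general A Pplus s ξ θ ρ σ hξ hθ N hbig h
end
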